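/- For any four points P_i = (x_i, y_i) ∈ ℝ² and all (x̂,ŷ) ∈ ℝ², the scalar curl of the vector field −((x₁+x₄)y₁₄/2)·φ̂_{0,0} + ((x₂+x₁)y₂₁/2)·φ̂_{1,0} + ((x₃+x₂)y₃₂/2)·φ̂_{1,1} − ((x₄+x₃)y₄₃/2)·φ̂_{0,1} + (ψ̂_{0,0} + ψ̂_{0,1} + ψ̂_{1,0} + ψ̂_{1,1}) equals J(x̂,ŷ), the Jacobian determinant of the bilinear map; i.e., under the contravariant transform this field has physical curl identically equal to 1. -/

import Mathlib

/-!
The scalar curl is linear, so it is enough to know the curl of each mode. Every edge mode is `±b`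
plus a lowest-order Whitney field of curl `±1/4`, for one common bubble field `b`. The edge
coefficients are the trapezoidal terms of `∮ x dy` around `P₁P₂P₃P₄`, so the edge part of the
combination has curl `A (1/4 − ∇×b)` with `A` the signed area of the quadrilateral. The vertex
modes, whose coefficients `cᵢ` are `4 J` at the corners of the reference square, supply the
polynomial remainder `J − A (1/4 − ∇×b)`.
-/

/-- Entry `B₁₁` of the Jacobian matrix of the bilinear map: `(x₂₁(1−ŷ) + x₃₄(1+ŷ))/4`. -/
noncomputable def B11 (x1 x2 x3 x4 yh : ℝ) : ℝ :=
  ((x2 - x1) * (1 - yh) + (x3 - x4) * (1 + yh)) / 4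

/-- Entry `B₁₂`: `(x₄₁(1−x̂) + x₃₂(1+x̂))/4`. -/
noncomputable def B12 (x1 x2 x3 x4 xh : ℝ) : ℝ :=
  ((x4 - x1) * (1 - xh) + (x3 - x2) * (1 + xh)) / 4

/-- Entry `B₂₁`: `(y₂₁(1−ŷ) + y₃₄(1+ŷ))/4`. -/
noncomputable def B21 (y1 y2 y3 y4 yh : ℝ) : ℝ :=
  ((y2 - y1) * (1 - yh) + (y3 - y4) * (1 + yh)) / 4

/-- Entry `B₂₂`: `(y₄₁(1−x̂) + y₃₂(1+x̂))/4`. -/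
noncomputable def B22 (y1 y2 y3 y4 xh : ℝ) : ℝ :=
  ((y4 - y1) * (1 - xh) + (y3 - y2) * (1 + xh)) / 4

/-- The Jacobian determinant `J(x̂,ŷ) = det B(x̂,ŷ)` of the bilinear map. -/
noncomputable def Jdet (x1 x2 x3 x4 y1 y2 y3 y4 xh yh : ℝ) : ℝ :=
  B11 x1 x2 x3 x4 yh * B22 y1 y2 y3 y4 xh - B12 x1 x2 x3 x4 xh * B21 y1 y2 y3 y4 yh

/-- Scalar curl of a planar vector field: `∇×u = ∂u₂/∂x̂ − ∂u₁/∂ŷ`. -/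
noncomputable def scurl (u : ℝ × ℝ → ℝ × ℝ) (z : ℝ × ℝ) : ℝ :=
  deriv (fun t => (u (t, z.2)).2) z.1 - deriv (fun t => (u (z.1, t)).1) z.2

/-- Lowest-order function edge mode `φ̂_{0,0}`. -/
noncomputable def phi00 (z : ℝ × ℝ) : ℝ × ℝ :=
  (z.2 * (z.2 ^ 2 - 1) * (3 * z.1 ^ 2 - 5) / 32,
   -(z.1 * (z.1 ^ 2 - 1) * (3 * z.2 ^ 2 - 5)) / 32 - (z.1 - 1) / 4)

/-- Lowest-order function edge mode `φ̂_{1,0}`. -/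
noncomputable def phi10 (z : ℝ × ℝ) : ℝ × ℝ :=
  (-(z.2 * (z.2 ^ 2 - 1) * (3 * z.1 ^ 2 - 5)) / 32 - (z.2 - 1) / 4,
   z.1 * (z.1 ^ 2 - 1) * (3 * z.2 ^ 2 - 5) / 32)

/-- Lowest-order function edge mode `φ̂_{1,1}`. -/
noncomputable def phi11 (z : ℝ × ℝ) : ℝ × ℝ :=
  (-(z.2 * (z.2 ^ 2 - 1) * (3 * z.1 ^ 2 - 5)) / 32,
   z.1 * (z.1 ^ 2 - 1) * (3 * z.2 ^ 2 - 5) / 32 + (1 + z.1) / 4)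

/-- Lowest-order function edge mode `φ̂_{0,1}`. -/
noncomputable def phi01 (z : ℝ × ℝ) : ℝ × ℝ :=
  (z.2 * (z.2 ^ 2 - 1) * (3 * z.1 ^ 2 - 5) / 32 + (1 + z.2) / 4,
   -(z.1 * (z.1 ^ 2 - 1) * (3 * z.2 ^ 2 - 5)) / 32)

/-- Vertex mode `ψ̂_{0,0}` (corresponding to vertex `P₁`). -/
noncomputable def psi00 (x1 x2 x3 x4 y1 y2 y3 y4 : ℝ) (z : ℝ × ℝ) : ℝ × ℝ :=
  let c1 := (x2 - x1) * (y4 - y1) - (y2 - y1) * (x4 - x1)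
  let c2 := (x3 - x2) * (y1 - y2) - (y3 - y2) * (x1 - x2)
  let c4 := (x1 - x4) * (y3 - y4) - (y1 - y4) * (x3 - x4)
  ((z.2 - 1) ^ 2 * (1 + z.2) * (z.1 - 1) * ((c1 + 2 * c2) * z.1 + 3 * c1 + 2 * c2) / 128,
   -((1 + z.1) * (z.2 - 1) * (z.1 - 1) ^ 2 * ((c1 + 2 * c4) * z.2 + 3 * c1 + 2 * c4)) / 128)

/-- Vertex mode `ψ̂_{0,1}` (corresponding to vertex `P₂`). -/
noncomputable def psi01 (x1 x2 x3 x4 y1 y2 y3 y4 : ℝ) (z : ℝ × ℝ) : ℝ × ℝ :=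
  let c1 := (x2 - x1) * (y4 - y1) - (y2 - y1) * (x4 - x1)
  let c2 := (x3 - x2) * (y1 - y2) - (y3 - y2) * (x1 - x2)
  let c3 := (x4 - x3) * (y2 - y3) - (y4 - y3) * (x2 - x3)
  ((z.2 - 1) ^ 2 * (1 + z.2) * (z.1 + 1) * ((2 * c1 + c2) * z.1 - (2 * c1 + 3 * c2)) / 128,
   (1 - z.1) * (z.2 - 1) * (1 + z.1) ^ 2 * ((c2 + 2 * c3) * z.2 + 3 * c2 + 2 * c3) / 128)

/-- Vertex mode `ψ̂_{1,1}` (corresponding to vertex `P₃`). -/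
noncomputable def psi11 (x1 x2 x3 x4 y1 y2 y3 y4 : ℝ) (z : ℝ × ℝ) : ℝ × ℝ :=
  let c2 := (x3 - x2) * (y1 - y2) - (y3 - y2) * (x1 - x2)
  let c3 := (x4 - x3) * (y2 - y3) - (y4 - y3) * (x2 - x3)
  let c4 := (x1 - x4) * (y3 - y4) - (y1 - y4) * (x3 - x4)
  ((z.2 + 1) ^ 2 * (1 - z.2) * (z.1 + 1) * (-(2 * c4 + c3) * z.1 + 2 * c4 + 3 * c3) / 128,
   (1 - z.1) * (z.2 + 1) * (z.1 + 1) ^ 2 * ((2 * c2 + c3) * z.2 - (2 * c2 + 3 * c3)) / 128)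

/-- Vertex mode `ψ̂_{1,0}` (corresponding to vertex `P₄`). -/
noncomputable def psi10 (x1 x2 x3 x4 y1 y2 y3 y4 : ℝ) (z : ℝ × ℝ) : ℝ × ℝ :=
  let c1 := (x2 - x1) * (y4 - y1) - (y2 - y1) * (x4 - x1)
  let c3 := (x4 - x3) * (y2 - y3) - (y4 - y3) * (x2 - x3)
  let c4 := (x1 - x4) * (y3 - y4) - (y1 - y4) * (x3 - x4)
  ((z.2 + 1) ^ 2 * (1 - z.2) * (z.1 - 1) * (-(c4 + 2 * c3) * z.1 - (3 * c4 + 2 * c3)) / 128,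
   (1 + z.1) * (z.2 + 1) * (z.1 - 1) ^ 2 * (-(2 * c1 + c4) * z.2 + 2 * c1 + 3 * c4) / 128)

theorem scurl_fun_add {u v : ℝ × ℝ → ℝ × ℝ} (hu : Differentiable ℝ u) (hv : Differentiable ℝ v)
    (z : ℝ × ℝ) : scurl (fun w => u w + v w) z = scurl u z + scurl v z := by
  simp only [scurl, Prod.fst_add, Prod.snd_add]
  rw [deriv_fun_add (by fun_prop) (by fun_prop), deriv_fun_add (by fun_prop) (by fun_prop)]
  ring

theorem scurl_fun_smul (c : ℝ) (u : ℝ × ℝ → ℝ × ℝ) (z : ℝ × ℝ) :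
    scurl (fun w => c • u w) z = c * scurl u z := by
  simp only [scurl, Prod.smul_fst, Prod.smul_snd, smul_eq_mul, deriv_const_mul_field']
  ring

section Modes

variable (x1 x2 x3 x4 y1 y2 y3 y4 : ℝ) (z : ℝ × ℝ)

@[fun_prop] theorem differentiable_phi00 : Differentiable ℝ phi00 := by unfold phi00; fun_prop
@[fun_prop] theorem differentiable_phi10 : Differentiable ℝ phi10 := by unfold phi10; fun_prop
@[fun_prop] theorem differentiable_phi11 : Differentiable ℝ phi11 := by unfold phi11; fun_prop
@[fun_prop] theorem differentiable_phi01 : Differentiable ℝ phi01 := by unfold phi01; fun_prop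

@[fun_prop] theorem differentiable_psi00 : Differentiable ℝ (psi00 x1 x2 x3 x4 y1 y2 y3 y4) := by
  unfold psi00; fun_prop
@[fun_prop] theorem differentiable_psi01 : Differentiable ℝ (psi01 x1 x2 x3 x4 y1 y2 y3 y4) := by
  unfold psi01; fun_prop
@[fun_prop] theorem differentiable_psi11 : Differentiable ℝ (psi11 x1 x2 x3 x4 y1 y2 y3 y4) := by
  unfold psi11; fun_prop
@[fun_prop] theorem differentiable_psi10 : Differentiable ℝ (psi10 x1 x2 x3 x4 y1 y2 y3 y4) := by
  unfold psi10; fun_prop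

/-- `−∇×b` for the bubble `b = (ŷ(ŷ²−1)(3x̂²−5), −x̂(x̂²−1)(3ŷ²−5))/32` shared by the edge modes. -/
noncomputable def bubbleCurl (z : ℝ × ℝ) : ℝ :=
  ((3 * z.1 ^ 2 - 1) * (3 * z.2 ^ 2 - 5) + (3 * z.2 ^ 2 - 1) * (3 * z.1 ^ 2 - 5)) / 32

theorem scurl_phi00 : scurl phi00 z = -bubbleCurl z - 1 / 4 := by
  simp (disch := fun_prop) only [scurl, phi00, bubbleCurl, deriv_fun_sub, deriv_fun_mul,
    deriv_fun_pow, deriv_div_const, deriv.fun_neg', deriv_id'', deriv_const']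
  ring

theorem scurl_phi10 : scurl phi10 z = bubbleCurl z + 1 / 4 := by
  simp (disch := fun_prop) only [scurl, phi10, bubbleCurl, deriv_fun_sub, deriv_fun_mul,
    deriv_fun_pow, deriv_div_const, deriv.fun_neg', deriv_id'', deriv_const']
  ring

theorem scurl_phi11 : scurl phi11 z = bubbleCurl z + 1 / 4 := by
  simp (disch := fun_prop) only [scurl, phi11, bubbleCurl, deriv_fun_add, deriv_fun_sub,
    deriv_fun_mul, deriv_fun_pow, deriv_div_const, deriv.fun_neg', deriv_id'', deriv_const',
    deriv_const_add_id']
  ring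

theorem scurl_phi01 : scurl phi01 z = -bubbleCurl z - 1 / 4 := by
  simp (disch := fun_prop) only [scurl, phi01, bubbleCurl, deriv_fun_add, deriv_fun_sub,
    deriv_fun_mul, deriv_fun_pow, deriv_div_const, deriv.fun_neg', deriv_id'', deriv_const',
    deriv_const_add_id']
  ring

def cornerCross (xa ya xb yb xc yc : ℝ) : ℝ :=
  (xb - xa) * (yc - ya) - (yb - ya) * (xc - xa)

theorem scurl_psi00 : scurl (psi00 x1 x2 x3 x4 y1 y2 y3 y4) z =
    let c1 := cornerCross x1 y1 x2 y2 x4 y4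
    let c2 := cornerCross x2 y2 x3 y3 x1 y1
    let c4 := cornerCross x4 y4 x1 y1 x3 y3
    (1 - z.1) * (z.2 - 1) * ((3 * z.1 + 1) * ((c1 + 2 * c4) * z.2 + 3 * c1 + 2 * c4) +
      (3 * z.2 + 1) * ((c1 + 2 * c2) * z.1 + 3 * c1 + 2 * c2)) / 128 := by
  simp (disch := fun_prop) only [scurl, psi00, cornerCross, deriv_fun_add, deriv_fun_sub,
    deriv_fun_mul, deriv_fun_pow, deriv_div_const, deriv.fun_neg', deriv_id'', deriv_const',
    deriv_const_add_id']
  ring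

theorem scurl_psi01 : scurl (psi01 x1 x2 x3 x4 y1 y2 y3 y4) z =
    let c1 := cornerCross x1 y1 x2 y2 x4 y4
    let c2 := cornerCross x2 y2 x3 y3 x1 y1
    let c3 := cornerCross x3 y3 x4 y4 x2 y2
    (z.1 + 1) * (z.2 - 1) * ((1 - 3 * z.1) * ((c2 + 2 * c3) * z.2 + 3 * c2 + 2 * c3) -
      (3 * z.2 + 1) * ((2 * c1 + c2) * z.1 - (2 * c1 + 3 * c2))) / 128 := by
  simp (disch := fun_prop) only [scurl, psi01, cornerCross, deriv_fun_add, deriv_fun_sub,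
    deriv_fun_mul, deriv_fun_pow, deriv_div_const, deriv_id'', deriv_const', deriv_const_add_id',
    deriv_const_sub_id']
  ring

theorem scurl_psi11 : scurl (psi11 x1 x2 x3 x4 y1 y2 y3 y4) z =
    let c2 := cornerCross x2 y2 x3 y3 x1 y1
    let c3 := cornerCross x3 y3 x4 y4 x2 y2
    let c4 := cornerCross x4 y4 x1 y1 x3 y3
    (z.1 + 1) * (z.2 + 1) * ((1 - 3 * z.1) * ((2 * c2 + c3) * z.2 - (2 * c2 + 3 * c3)) -
      (1 - 3 * z.2) * (-(2 * c4 + c3) * z.1 + 2 * c4 + 3 * c3)) / 128 := by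
  simp (disch := fun_prop) only [scurl, psi11, cornerCross, deriv_fun_add, deriv_fun_sub,
    deriv_fun_mul, deriv_fun_pow, deriv_div_const, deriv.fun_neg', deriv_id'', deriv_const',
    deriv_const_sub_id']
  ring

theorem scurl_psi10 : scurl (psi10 x1 x2 x3 x4 y1 y2 y3 y4) z =
    let c1 := cornerCross x1 y1 x2 y2 x4 y4
    let c3 := cornerCross x3 y3 x4 y4 x2 y2
    let c4 := cornerCross x4 y4 x1 y1 x3 y3
    (z.1 - 1) * (z.2 + 1) * ((3 * z.1 + 1) * (-(2 * c1 + c4) * z.2 + 2 * c1 + 3 * c4) -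
      (1 - 3 * z.2) * (-(c4 + 2 * c3) * z.1 - (3 * c4 + 2 * c3))) / 128 := by
  simp (disch := fun_prop) only [scurl, psi10, cornerCross, deriv_fun_add, deriv_fun_sub,
    deriv_fun_mul, deriv_fun_pow, deriv_div_const, deriv.fun_neg', deriv_id'', deriv_const',
    deriv_const_add_id', deriv_const_sub_id']
  ring

end Modes

noncomputable def signedArea (x1 x2 x3 x4 y1 y2 y3 y4 : ℝ) : ℝ :=
  ((x2 + x1) * (y2 - y1) + (x3 + x2) * (y3 - y2) + (x4 + x3) * (y4 - y3) +
    (x1 + x4) * (y1 - y4)) / 2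

theorem scurl_edge_combination (x1 x2 x3 x4 y1 y2 y3 y4 : ℝ) (z : ℝ × ℝ) :
    scurl (fun w =>
      (-((x1 + x4) * (y1 - y4) / 2)) • phi00 w + ((x2 + x1) * (y2 - y1) / 2) • phi10 w +
        ((x3 + x2) * (y3 - y2) / 2) • phi11 w + (-((x4 + x3) * (y4 - y3) / 2)) • phi01 w) z
    = signedArea x1 x2 x3 x4 y1 y2 y3 y4 * (bubbleCurl z + 1 / 4) := by
  simp (disch := fun_prop) only [scurl_fun_add, scurl_fun_smul, scurl_phi00, scurl_phi10,
    scurl_phi11, scurl_phi01]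
  simp only [signedArea]
  ring

theorem scurl_vertex_sum (x1 x2 x3 x4 y1 y2 y3 y4 : ℝ) (z : ℝ × ℝ) :
    scurl (fun w => psi00 x1 x2 x3 x4 y1 y2 y3 y4 w + psi01 x1 x2 x3 x4 y1 y2 y3 y4 w +
        psi10 x1 x2 x3 x4 y1 y2 y3 y4 w + psi11 x1 x2 x3 x4 y1 y2 y3 y4 w) z
    = Jdet x1 x2 x3 x4 y1 y2 y3 y4 z.1 z.2 -
        signedArea x1 x2 x3 x4 y1 y2 y3 y4 * (bubbleCurl z + 1 / 4) := by
  simp (disch := fun_prop) only [scurl_fun_add, scurl_psi00, scurl_psi01, scurl_psi10, scurl_psi11]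
  simp only [Jdet, B11, B12, B21, B22, signedArea, bubbleCurl, cornerCross]
  ring

/-- The scalar curl of the combination
`−((x₁+x₄)y₁₄/2)φ̂₀₀ + ((x₂+x₁)y₂₁/2)φ̂₁₀ + ((x₃+x₂)y₃₂/2)φ̂₁₁ − ((x₄+x₃)y₄₃/2)φ̂₀₁
 + (ψ̂₀₀ + ψ̂₀₁ + ψ̂₁₀ + ψ̂₁₁)` equals the Jacobian determinant `J(x̂,ŷ)`; under the
contravariant transform this field has physical curl identically 1. -/
theorem curl_of_combination_eq_jacobian (x1 x2 x3 x4 y1 y2 y3 y4 : ℝ) (z : ℝ × ℝ) :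
    scurl (fun w =>
      (-((x1 + x4) * (y1 - y4) / 2)) • phi00 w + ((x2 + x1) * (y2 - y1) / 2) • phi10 w +
        ((x3 + x2) * (y3 - y2) / 2) • phi11 w + (-((x4 + x3) * (y4 - y3) / 2)) • phi01 w +
        (psi00 x1 x2 x3 x4 y1 y2 y3 y4 w + psi01 x1 x2 x3 x4 y1 y2 y3 y4 w +
          psi10 x1 x2 x3 x4 y1 y2 y3 y4 w + psi11 x1 x2 x3 x4 y1 y2 y3 y4 w)) z
    = Jdet x1 x2 x3 x4 y1 y2 y3 y4 z.1 z.2 := by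
  rw [scurl_fun_add (by fun_prop) (by fun_prop), scurl_edge_combination, scurl_vertex_sum]
  ring
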